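/- arXiv:1212.2116 — 5 statements merged into one kernel-verified Lean document; each statement's English description precedes it below -/
import Mathlib

section
/- Let L be a Lie algebra over ℚ, E a field of characteristic zero, and K an E-completion of L (i.e., K is a Lie algebra over E containing L as a ℚ-Lie subalgebra with K = Span_E(L)). Then the map φ*: E ⊗_ℚ L → K induced by φ*(x ⊗ a) = x·a is a surjective homomorphism of E-Lie algebras whose kernel N satisfies N ∩ (1 ⊗ L) = 0; hence K ≅ (E ⊗_ℚ L)/N for an entangled ideal N. -/
open scoped TensorProduct

noncomputable def auxLin (E L K : Type) [Field E] [CharZero E]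
    [LieRing L] [LieAlgebra ℚ L]
    [LieRing K] [LieAlgebra E K] [LieAlgebra ℚ K] [IsScalarTower ℚ E K]
    (ι : L →ₗ⁅ℚ⁆ K) : E ⊗[ℚ] L →ₗ[E] K :=
  TensorProduct.AlgebraTensorModule.lift
    { toFun := fun x => x • (ι : L →ₗ[ℚ] K)
      map_add' := fun x y => add_smul x y _
      map_smul' := fun x y => mul_smul x y _ }

theorem auxLin_tmul (E L K : Type) [Field E] [CharZero E]
    [LieRing L] [LieAlgebra ℚ L]
    [LieRing K] [LieAlgebra E K] [LieAlgebra ℚ K] [IsScalarTower ℚ E K]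
    (ι : L →ₗ⁅ℚ⁆ K) (x : E) (a : L) : auxLin E L K ι (x ⊗ₜ[ℚ] a) = x • ι a := rfl

theorem auxLin_lie (E L K : Type) [Field E] [CharZero E]
    [LieRing L] [LieAlgebra ℚ L]
    [LieRing K] [LieAlgebra E K] [LieAlgebra ℚ K] [IsScalarTower ℚ E K]
    (ι : L →ₗ⁅ℚ⁆ K) (x y : E ⊗[ℚ] L) :
    auxLin E L K ι ⁅x, y⁆ = ⁅auxLin E L K ι x, auxLin E L K ι y⁆ := by
  induction x using TensorProduct.induction_on with
  | zero => simp
  | tmul s a =>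
    induction y using TensorProduct.induction_on with
    | zero => simp
    | tmul t b =>
      simp [LieAlgebra.ExtendScalars.bracket_tmul, auxLin_tmul, smul_lie, lie_smul,
        smul_smul, mul_comm]
    | add y z hy hz => simp [lie_add, hy, hz]
  | add x z hx hz => simp [add_lie, hx, hz]

noncomputable def auxLieHom (E L K : Type) [Field E] [CharZero E]
    [LieRing L] [LieAlgebra ℚ L]
    [LieRing K] [LieAlgebra E K] [LieAlgebra ℚ K] [IsScalarTower ℚ E K]
    (ι : L →ₗ⁅ℚ⁆ K) : E ⊗[ℚ] L →ₗ⁅E⁆ K :=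
  { auxLin E L K ι with map_lie' := auxLin_lie E L K ι _ _ }

theorem auxLieHom_tmul (E L K : Type) [Field E] [CharZero E]
    [LieRing L] [LieAlgebra ℚ L]
    [LieRing K] [LieAlgebra E K] [LieAlgebra ℚ K] [IsScalarTower ℚ E K]
    (ι : L →ₗ⁅ℚ⁆ K) (x : E) (a : L) : auxLieHom E L K ι (x ⊗ₜ[ℚ] a) = x • ι a := rfl


/-- If `K` is an `E`-completion of the rational Lie algebra `L` (i.e. `L` is a ℚ-Lie
subalgebra of `K`, realized by an injective ℚ-Lie homomorphism `ι`, and `K = Span_E(L)`),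
then the induced map `φ : E ⊗_ℚ L → K` with `φ (x ⊗ a) = x • ι a` is a surjective
homomorphism of `E`-Lie algebras whose kernel `N` is entangled (`N ∩ (1 ⊗ L) = 0`), and
`K ≅ (E ⊗_ℚ L) ⧸ N`. -/
theorem completion_is_quotient_by_entangled_ideal
    (E L K : Type) [Field E] [CharZero E]
    [LieRing L] [LieAlgebra ℚ L]
    [LieRing K] [LieAlgebra E K] [LieAlgebra ℚ K] [IsScalarTower ℚ E K]
    (ι : L →ₗ⁅ℚ⁆ K) (hinj : Function.Injective ι)
    (hspan : Submodule.span E (Set.range ι) = ⊤) :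
    ∃ φ : E ⊗[ℚ] L →ₗ⁅E⁆ K,
      (∀ (x : E) (a : L), φ (x ⊗ₜ[ℚ] a) = x • ι a) ∧
      Function.Surjective φ ∧
      (∀ a : L, (1 : E) ⊗ₜ[ℚ] a ∈ φ.ker → a = 0) ∧
      Nonempty (((E ⊗[ℚ] L) ⧸ φ.ker) ≃ₗ⁅E⁆ K) := by
  have hsub : Submodule.span E (Set.range ι) ≤
      LinearMap.range ((auxLieHom E L K ι : E ⊗[ℚ] L →ₗ⁅E⁆ K) : E ⊗[ℚ] L →ₗ[E] K) := by
    rw [Submodule.span_le]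
    rintro _ ⟨a, rfl⟩
    exact ⟨(1 : E) ⊗ₜ[ℚ] a, by simp [auxLieHom_tmul]⟩
  have hsurj : Function.Surjective (auxLieHom E L K ι) := by
    intro k
    have hk : k ∈ LinearMap.range ((auxLieHom E L K ι : E ⊗[ℚ] L →ₗ⁅E⁆ K) : E ⊗[ℚ] L →ₗ[E] K) :=
      hsub (hspan ▸ Submodule.mem_top)
    exact hk
  refine ⟨auxLieHom E L K ι, fun x a => rfl, hsurj, ?_, ?_⟩
  · intro a ha
    have h1 : (auxLieHom E L K ι) ((1 : E) ⊗ₜ[ℚ] a) = 0 := ha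
    rw [auxLieHom_tmul, one_smul] at h1
    exact hinj (by simpa using h1)
  · have hr : (((auxLieHom E L K ι).range : LieSubalgebra E K) : Set K) =
        ((⊤ : LieSubalgebra E K) : Set K) := by
      ext k; simp [LieHom.mem_range, hsurj k]
    exact ⟨(auxLieHom E L K ι).quotKerEquivRange.trans
      ((LieEquiv.ofEq _ _ hr).trans LieSubalgebra.topEquiv)⟩
end

section
/- Let L be a Lie algebra over a field E of characteristic zero, I a ℚ-ideal of L, f a ℚ-Lie-algebra automorphism of L, and σ a field automorphism of E. Then N(I,f,σ) = { Σᵢ xᵢ ⊗ aᵢ ∈ E ⊗_ℚ I : Σᵢ σ(xᵢ)·f(aᵢ) = 0 } is a well-defined entangled ideal of the E-Lie algebra E ⊗_ℚ L. -/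
open scoped TensorProduct

/-- The ℚ-linear map `E ⊗_ℚ L → L` induced by the ℚ-bilinear map `(x, a) ↦ σ(x) • f(a)`,
for a field automorphism `σ` of `E` and a ℚ-Lie automorphism `f` of `L`. -/
noncomputable def sigmaFLift (E L : Type) [Field E] [CharZero E] [LieRing L]
    [LieAlgebra E L] [LieAlgebra ℚ L] [IsScalarTower ℚ E L]
    (σ : E ≃ₐ[ℚ] E) (f : L ≃ₗ⁅ℚ⁆ L) : E ⊗[ℚ] L →ₗ[ℚ] L :=
  TensorProduct.lift
    (LinearMap.mk₂ ℚ (fun x a => σ x • f a)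
      (fun x y a => by (try dsimp only); rw [map_add, add_smul])
      (fun q x a => by (try dsimp only); rw [show σ (q • x) = q • σ x from map_smul σ.toLinearEquiv q x, smul_assoc])
      (fun x a b => by (try dsimp only); rw [show f (a + b) = f a + f b from map_add f.toLinearEquiv a b, smul_add])
      (fun q x a => by (try dsimp only); rw [show f (q • a) = q • f a from map_smul f.toLinearEquiv q a, smul_comm]))

/-- `N(I,f,σ)`, as a subset of `E ⊗_ℚ L`: the elements of `E ⊗_ℚ I` on which the induced
map `Σᵢ xᵢ ⊗ aᵢ ↦ Σᵢ σ(xᵢ) • f(aᵢ)` vanishes. -/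
noncomputable def entangledSet (E L : Type) [Field E] [CharZero E] [LieRing L]
    [LieAlgebra E L] [LieAlgebra ℚ L] [IsScalarTower ℚ E L]
    (I : LieIdeal ℚ L) (f : L ≃ₗ⁅ℚ⁆ L) (σ : E ≃ₐ[ℚ] E) : Set (E ⊗[ℚ] L) :=
  {n | n ∈ LinearMap.range
        (TensorProduct.map (LinearMap.id : E →ₗ[ℚ] E) (I : Submodule ℚ L).subtype) ∧
      sigmaFLift E L σ f n = 0}

/-! `N(I,f,σ)` is the intersection of the base change `E ⊗_ℚ I`, an `E`-Lie ideal, with the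
kernel of `sigmaFLift`. That map is `σ`-semilinear and preserves brackets, so its kernel is an
`E`-Lie ideal as well; on `1 ⊗ L` it restricts to the injective map `f`. -/

section

variable {E L : Type} [Field E] [CharZero E] [LieRing L] [LieAlgebra E L]
    [LieAlgebra ℚ L] [IsScalarTower ℚ E L] (σ : E ≃ₐ[ℚ] E) (f : L ≃ₗ⁅ℚ⁆ L)

lemma sigmaFLift_tmul (x : E) (a : L) : sigmaFLift E L σ f (x ⊗ₜ[ℚ] a) = σ x • f a := rfl

lemma sigmaFLift_smul (c : E) (n : E ⊗[ℚ] L) :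
    sigmaFLift E L σ f (c • n) = σ c • sigmaFLift E L σ f n := by
  induction n using TensorProduct.induction_on with
  | zero => simp
  | tmul x a =>
    rw [TensorProduct.smul_tmul', smul_eq_mul, sigmaFLift_tmul, sigmaFLift_tmul, map_mul, mul_smul]
  | add m n hm hn => rw [smul_add, map_add, hm, hn, map_add, smul_add]

lemma sigmaFLift_lie (z n : E ⊗[ℚ] L) :
    sigmaFLift E L σ f ⁅z, n⁆ = ⁅sigmaFLift E L σ f z, sigmaFLift E L σ f n⁆ := by
  induction z using TensorProduct.induction_on with
  | zero => simp
  | add z₁ z₂ h₁ h₂ => rw [add_lie, map_add, h₁, h₂, map_add, add_lie]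
  | tmul x a =>
    induction n using TensorProduct.induction_on with
    | zero => simp
    | add n₁ n₂ h₁ h₂ => rw [lie_add, map_add, h₁, h₂, map_add, lie_add]
    | tmul y b =>
      rw [LieAlgebra.ExtendScalars.bracket_tmul, sigmaFLift_tmul, sigmaFLift_tmul,
        sigmaFLift_tmul, map_mul, smul_lie, lie_smul, mul_smul, f.map_lie]

def sigmaFLiftKer : LieIdeal E (E ⊗[ℚ] L) where
  carrier := {n | sigmaFLift E L σ f n = 0}
  add_mem' {m n} (hm : sigmaFLift E L σ f m = 0) (hn : sigmaFLift E L σ f n = 0) :=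
    show _ = 0 by rw [map_add, hm, hn, add_zero]
  zero_mem' := map_zero _
  smul_mem' c n (hn : sigmaFLift E L σ f n = 0) :=
    show _ = 0 by rw [sigmaFLift_smul, hn, smul_zero]
  lie_mem {z n} (hn : sigmaFLift E L σ f n = 0) :=
    show _ = 0 by rw [sigmaFLift_lie, hn, lie_zero]

lemma one_tmul_mem_sigmaFLiftKer_iff (a : L) :
    (1 : E) ⊗ₜ[ℚ] a ∈ sigmaFLiftKer σ f ↔ a = 0 := by
  change sigmaFLift E L σ f _ = 0 ↔ _
  rw [sigmaFLift_tmul, map_one, one_smul, EmbeddingLike.map_eq_zero_iff]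

/-- `Submodule.baseChange` is by definition the range of `E ⊗_ℚ I → E ⊗_ℚ L`. -/
lemma coe_baseChange_inf_sigmaFLiftKer (I : LieIdeal ℚ L) :
    ((I.baseChange E ⊓ sigmaFLiftKer σ f : LieIdeal E (E ⊗[ℚ] L)) : Set (E ⊗[ℚ] L)) =
      entangledSet E L I f σ :=
  rfl

end

/-- For a ℚ-ideal `I` of `L`, a ℚ-Lie automorphism `f` of `L` and a field automorphism `σ`
of `E`, the set `N(I,f,σ) = { Σᵢ xᵢ ⊗ aᵢ ∈ E ⊗_ℚ I : Σᵢ σ(xᵢ)·f(aᵢ) = 0 }` is a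
well-defined entangled ideal of the `E`-Lie algebra `E ⊗_ℚ L`. -/
theorem entangledSet_is_entangled_ideal
    (E L : Type) [Field E] [CharZero E] [LieRing L] [LieAlgebra E L]
    [LieAlgebra ℚ L] [IsScalarTower ℚ E L]
    (I : LieIdeal ℚ L) (f : L ≃ₗ⁅ℚ⁆ L) (σ : E ≃ₐ[ℚ] E) :
    ∃ N : LieIdeal E (E ⊗[ℚ] L),
      (N : Set (E ⊗[ℚ] L)) = entangledSet E L I f σ ∧
      ∀ a : L, (1 : E) ⊗ₜ[ℚ] a ∈ N → a = 0 :=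
  ⟨I.baseChange E ⊓ sigmaFLiftKer σ f, coe_baseChange_inf_sigmaFLiftKer σ f I,
    fun a ha => (one_tmul_mem_sigmaFLiftKer_iff σ f a).mp ha.2⟩
end

section
/- Let E be a finite extension of ℚ and L a finite-dimensional Lie algebra over E. For f ∈ Aut_ℚ(L) and σ ∈ Aut(E), the invertible ℚ-linear map σ ⊗ f on E ⊗_ℚ L defined by (σ⊗f)(x ⊗ a) = σ(x) ⊗ f(a) maps the entangled ideal N(I,f,σ) onto N(f(I),1,1), and consequently dim_E K(I,f,σ) = dim_E K(f(I),1,1), where K(I,f,σ) = (E ⊗_ℚ L)/N(I,f,σ). -/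
open scoped TensorProduct

/-!
The contraction `x ⊗ a ↦ σ(x) f(a)` defining `N(I,f,σ)` is the untwisted contraction `x ⊗ a ↦ x a`
precomposed with `σ ⊗ f`, and `σ ⊗ f` carries `E ⊗ I` onto `E ⊗ f(I)`; hence it maps `N(I,f,σ)`
onto `N(f(I),1,1)`. Since `σ ⊗ f` is `σ`-semilinear for the `E`-structure on the left factor, it
induces a `σ`-semilinear isomorphism `K(I,f,σ) ≃ K(f(I),1,1)`, and a semilinear isomorphism along
a ring automorphism preserves dimension.
-/

open TensorProduct

attribute [local instance] RingHomInvPair.of_ringEquiv RingHomInvPair.of_ringEquiv_symm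

theorem Submodule.finrank_quotient_eq_of_semilinearEquiv {R R' M M' : Type*} [Ring R] [Ring R']
    [AddCommGroup M] [AddCommGroup M'] [Module R M] [Module R' M'] (σ : R ≃+* R')
    (e : M ≃ₛₗ[(σ : R →+* R')] M') (P : Submodule R M) (Q : Submodule R' M')
    (h : P.map (e : M →ₛₗ[(σ : R →+* R')] M') = Q) :
    Module.finrank R (M ⧸ P) = Module.finrank R' (M' ⧸ Q) := by
  let e' := Submodule.Quotient.equiv P Q e h
  simpa using!
    congrArg Cardinal.toNat (lift_rank_eq_of_equiv_equiv σ e'.toAddEquiv σ.bijective e'.map_smulₛₗ)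

namespace TensorProduct

theorem map_congr_range_lTensor_subtype {R M M' N N' : Type*} [CommSemiring R]
    [AddCommMonoid M] [AddCommMonoid M'] [AddCommMonoid N] [AddCommMonoid N']
    [Module R M] [Module R M'] [Module R N] [Module R N']
    (e : M ≃ₗ[R] M') (f : N ≃ₗ[R] N') (p : Submodule R N) :
    (LinearMap.range (p.subtype.lTensor M)).map (congr e f).toLinearMap =
      LinearMap.range ((p.map (f : N →ₗ[R] N')).subtype.lTensor M') := by
  have hcomm : (congr e f).toLinearMap ∘ₗ p.subtype.lTensor M =
      (p.map (f : N →ₗ[R] N')).subtype.lTensor M' ∘ₗ (congr e (f.submoduleMap p)).toLinearMap :=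
    ext' fun _ _ => rfl
  rw [← LinearMap.range_comp, hcomm, LinearMap.range_comp_of_range_eq_top _ (LinearEquiv.range _)]

theorem congr_smul {R A M N : Type*} [CommSemiring R] [CommSemiring A] [Algebra R A]
    [AddCommMonoid M] [AddCommMonoid N] [Module R M] [Module R N]
    (σ : A ≃ₐ[R] A) (f : M ≃ₗ[R] N) (c : A) (x : A ⊗[R] M) :
    congr σ.toLinearEquiv f (c • x) = σ c • congr σ.toLinearEquiv f x := by
  induction x using TensorProduct.induction_on with
  | zero => simp
  | tmul a m => simp [smul_tmul']
  | add x y hx hy => simp only [smul_add, map_add, hx, hy]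

def congrₛₗ {R A M N : Type*} [CommSemiring R] [CommSemiring A] [Algebra R A]
    [AddCommMonoid M] [AddCommMonoid N] [Module R M] [Module R N]
    (σ : A ≃ₐ[R] A) (f : M ≃ₗ[R] N) : A ⊗[R] M ≃ₛₗ[(σ.toRingEquiv : A →+* A)] A ⊗[R] N :=
  { (congr σ.toLinearEquiv f).toAddEquiv with map_smul' := congr_smul σ f }

end TensorProduct

section entangled

variable (E L : Type) [Field E] [CharZero E] [LieRing L] [LieAlgebra E L] [LieAlgebra ℚ L]
  [IsScalarTower ℚ E L]

theorem sigmaFLift_refl_comp_congr (σ : E ≃ₐ[ℚ] E) (f : L ≃ₗ⁅ℚ⁆ L) :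
    sigmaFLift E L AlgEquiv.refl LieEquiv.refl ∘ₗ
        (congr σ.toLinearEquiv f.toLinearEquiv).toLinearMap = sigmaFLift E L σ f :=
  ext' fun _ _ => rfl

theorem image_congr_entangledSet (I : LieIdeal ℚ L) (f : L ≃ₗ⁅ℚ⁆ L) (σ : E ≃ₐ[ℚ] E) :
    congr σ.toLinearEquiv f.toLinearEquiv '' entangledSet E L I f σ =
      entangledSet E L (I.map f.toLieHom) LieEquiv.refl AlgEquiv.refl := by
  have hrange := congrArg SetLike.coe
    (map_congr_range_lTensor_subtype σ.toLinearEquiv f.toLinearEquiv (I : Submodule ℚ L))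
  have hmap : ((I.map f.toLieHom : LieIdeal ℚ L) : Submodule ℚ L) =
      (I : Submodule ℚ L).map (f.toLinearEquiv : L →ₗ[ℚ] L) :=
    LieIdeal.coe_map_of_surjective f.surjective
  rw [Submodule.map_coe, ← hmap] at hrange
  simp only [entangledSet, Set.ofPred_and, ← sigmaFLift_refl_comp_congr E L σ f]
  exact (Set.image_inter_preimage _ _ {m | sigmaFLift E L AlgEquiv.refl LieEquiv.refl m = 0}).trans
    (congrArg (· ∩ _) hrange)

end entangled

theorem sigma_tensor_f_maps_entangled_ideal_general
    (E L : Type) [Field E] [CharZero E]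
    [LieRing L] [LieAlgebra E L] [LieAlgebra ℚ L] [IsScalarTower ℚ E L]
    (I : LieIdeal ℚ L) (f : L ≃ₗ⁅ℚ⁆ L) (σ : E ≃ₐ[ℚ] E)
    (N₁ N₂ : LieIdeal E (E ⊗[ℚ] L))
    (hN₁ : (N₁ : Set (E ⊗[ℚ] L)) = entangledSet E L I f σ)
    (hN₂ : (N₂ : Set (E ⊗[ℚ] L)) =
      entangledSet E L (LieIdeal.map f.toLieHom I) (LieEquiv.refl : L ≃ₗ⁅ℚ⁆ L) (AlgEquiv.refl : E ≃ₐ[ℚ] E)) :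
    (TensorProduct.congr σ.toLinearEquiv f.toLinearEquiv) '' (N₁ : Set (E ⊗[ℚ] L)) =
        (N₂ : Set (E ⊗[ℚ] L)) ∧
      Module.finrank E ((E ⊗[ℚ] L) ⧸ N₁) = Module.finrank E ((E ⊗[ℚ] L) ⧸ N₂) := by
  have himage : congr σ.toLinearEquiv f.toLinearEquiv '' (N₁ : Set (E ⊗[ℚ] L)) = N₂ := by
    rw [hN₁, hN₂, image_congr_entangledSet]
  refine ⟨himage, ?_⟩
  refine Submodule.finrank_quotient_eq_of_semilinearEquiv σ.toRingEquiv (congrₛₗ σ f.toLinearEquiv)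
    (N₁ : Submodule E (E ⊗[ℚ] L)) N₂ (SetLike.coe_injective ?_)
  rw [Submodule.map_coe]
  exact himage

/-- For `E` a finite extension of ℚ and `L` a finite-dimensional `E`-Lie algebra, the
invertible ℚ-linear map `σ ⊗ f` on `E ⊗_ℚ L` maps the entangled ideal `N(I,f,σ)` onto
`N(f(I),1,1)`, and consequently `dim_E K(I,f,σ) = dim_E K(f(I),1,1)`, where `K(I,f,σ)` is
the quotient `(E ⊗_ℚ L) ⧸ N(I,f,σ)`. -/
theorem sigma_tensor_f_maps_entangled_ideal
    (E L : Type) [Field E] [CharZero E] [FiniteDimensional ℚ E]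
    [LieRing L] [LieAlgebra E L] [LieAlgebra ℚ L] [IsScalarTower ℚ E L]
    [FiniteDimensional E L]
    (I : LieIdeal ℚ L) (f : L ≃ₗ⁅ℚ⁆ L) (σ : E ≃ₐ[ℚ] E)
    (N₁ N₂ : LieIdeal E (E ⊗[ℚ] L))
    (hN₁ : (N₁ : Set (E ⊗[ℚ] L)) = entangledSet E L I f σ)
    (hN₂ : (N₂ : Set (E ⊗[ℚ] L)) =
      entangledSet E L (LieIdeal.map f.toLieHom I) (LieEquiv.refl : L ≃ₗ⁅ℚ⁆ L) (AlgEquiv.refl : E ≃ₐ[ℚ] E)) :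
    (TensorProduct.congr σ.toLinearEquiv f.toLinearEquiv) '' (N₁ : Set (E ⊗[ℚ] L)) =
        (N₂ : Set (E ⊗[ℚ] L)) ∧
      Module.finrank E ((E ⊗[ℚ] L) ⧸ N₁) = Module.finrank E ((E ⊗[ℚ] L) ⧸ N₂) :=
  sigma_tensor_f_maps_entangled_ideal_general E L I f σ N₁ N₂ hN₁ hN₂
end

section
/- Let L be a Lie algebra over ℚ and K = (E ⊗_ℚ L)/N a completion of L, where N is an entangled ideal. Then for every n, γₙ(K) = (E ⊗_ℚ γₙ(L) + N)/N, i.e., the n-th term of the lower central series of K is the image of E ⊗_ℚ γₙ(L) in the quotient. -/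
/-!
The lower central series is compatible with surjective morphisms of Lie algebras and with
extension of scalars: `γₙ(E ⊗_ℚ L) = E ⊗_ℚ γₙ(L)`. Pushing the latter along the quotient map
`E ⊗_ℚ L → (E ⊗_ℚ L) ⧸ N` gives `γₙ(K)`.
-/

open scoped TensorProduct

def LieIdeal.mkQ {R L : Type*} [CommRing R] [LieRing L] [LieAlgebra R L] (I : LieIdeal R L) :
    L →ₗ⁅R⁆ L ⧸ I :=
  { (I : Submodule R L).mkQ with map_lie' := rfl }

theorem LieIdeal.mkQ_surjective {R L : Type*} [CommRing R] [LieRing L] [LieAlgebra R L]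
    (I : LieIdeal R L) : Function.Surjective I.mkQ :=
  Submodule.mkQ_surjective _

theorem LieIdeal.coe_lowerCentralSeries_eq_image_of_surjective {R L L' : Type*} [CommRing R]
    [LieRing L] [LieAlgebra R L] [LieRing L'] [LieAlgebra R L'] {f : L →ₗ⁅R⁆ L'}
    (hf : Function.Surjective f) (k : ℕ) :
    (LieModule.lowerCentralSeries R L' L' k : Set L') =
      f '' (LieModule.lowerCentralSeries R L L k : Set L) := by
  rw [← LieIdeal.lowerCentralSeries_map_eq k hf, ← LieSubmodule.coe_toSubmodule,
    LieIdeal.coe_map_of_surjective hf]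
  rfl

theorem LieModule.coe_lowerCentralSeries_baseChange (R A L : Type*) [CommRing R] [CommRing A]
    [Algebra R A] [LieRing L] [LieAlgebra R L] (k : ℕ) :
    (lowerCentralSeries A (A ⊗[R] L) (A ⊗[R] L) k : Set (A ⊗[R] L)) =
      LinearMap.range (TensorProduct.map (LinearMap.id : A →ₗ[R] A)
        (lowerCentralSeries R L L k : Submodule R L).subtype) := by
  rw [LieSubmodule.lowerCentralSeries_tensor_eq_baseChange]
  rfl

theorem lowerCentralSeries_of_completion_general
    (E L : Type) [Field E] [CharZero E] [LieRing L] [LieAlgebra ℚ L]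
    (N : LieIdeal E (E ⊗[ℚ] L)) (n : ℕ) :
    ((LieModule.lowerCentralSeries E ((E ⊗[ℚ] L) ⧸ N) ((E ⊗[ℚ] L) ⧸ N) n :
        LieSubmodule E ((E ⊗[ℚ] L) ⧸ N) ((E ⊗[ℚ] L) ⧸ N)) : Set ((E ⊗[ℚ] L) ⧸ N)) =
      (LieSubmodule.Quotient.mk (N := N)) ''
        (LinearMap.range (TensorProduct.map (LinearMap.id : E →ₗ[ℚ] E)
          ((LieModule.lowerCentralSeries ℚ L L n : LieSubmodule ℚ L L) : Submodule ℚ L).subtype) :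
            Set (E ⊗[ℚ] L)) := by
  rw [← LieModule.coe_lowerCentralSeries_baseChange]
  exact LieIdeal.coe_lowerCentralSeries_eq_image_of_surjective N.mkQ_surjective n

/-- For a completion `K = (E ⊗_ℚ L) ⧸ N` of the rational Lie algebra `L` by an entangled
ideal `N`, the `n`-th term of the lower central series of `K` is the image of
`E ⊗_ℚ γₙ(L)` in the quotient, i.e. `γₙ(K) = (E ⊗_ℚ γₙ(L) + N) / N`. -/
theorem lowerCentralSeries_of_completion
    (E L : Type) [Field E] [CharZero E] [LieRing L] [LieAlgebra ℚ L]
    (N : LieIdeal E (E ⊗[ℚ] L))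
    (hN : ∀ a : L, (1 : E) ⊗ₜ[ℚ] a ∈ N → a = 0) (n : ℕ) :
    ((LieModule.lowerCentralSeries E ((E ⊗[ℚ] L) ⧸ N) ((E ⊗[ℚ] L) ⧸ N) n :
        LieSubmodule E ((E ⊗[ℚ] L) ⧸ N) ((E ⊗[ℚ] L) ⧸ N)) : Set ((E ⊗[ℚ] L) ⧸ N)) =
      (LieSubmodule.Quotient.mk (N := N)) ''
        (LinearMap.range (TensorProduct.map (LinearMap.id : E →ₗ[ℚ] E)
          ((LieModule.lowerCentralSeries ℚ L L n : LieSubmodule ℚ L L) : Submodule ℚ L).subtype) :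
            Set (E ⊗[ℚ] L)) :=
  lowerCentralSeries_of_completion_general E L N n
end

section
/- Let L be a Lie algebra over ℚ and (K, E) a completion of L. If L is nilpotent of class c, then K is nilpotent of class exactly c. -/
/-!
Since the bracket of `K` is `E`-bilinear and `K` is the `E`-span of `ι L`, induction shows that
the `k`-th term of the lower central series of `K` is the `E`-span of the image of the `k`-th term
for `L`. As `ι` is injective, one term vanishes exactly when the other does.
-/

open LieModule Submodule

namespace Submodule

theorem span_image_span_of_tower {R E M N : Type*} [CommSemiring R] [Semiring E] [Algebra R E]
    [AddCommMonoid M] [Module R M] [AddCommMonoid N] [Module R N] [Module E N]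
    [IsScalarTower R E N] (f : M →ₗ[R] N) (s : Set M) :
    span E (f '' span R s) = span E (f '' s) := by
  rw [← map_coe, ← span_image, span_span_of_tower]

theorem span_image2_lie_span_span {E K : Type*} [CommRing E] [LieRing K] [LieAlgebra E K]
    (s t : Set K) :
    span E (Set.image2 (⁅·, ·⁆) (span E s : Set K) (span E t)) =
      span E (Set.image2 (⁅·, ·⁆) s t) := by
  simpa [map₂_eq_span_image2] using
    map₂_span_span E (LieModule.toEnd E K K : K →ₗ[E] Module.End E K) s t

end Submodule

namespace LieHom

variable {R E L K : Type*} [CommRing R] [CommRing E] [Algebra R E]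
  [LieRing L] [LieAlgebra R L] [LieRing K] [LieAlgebra E K] [LieAlgebra R K]
  [IsScalarTower R E K] (f : L →ₗ⁅R⁆ K)

theorem image2_lie_range (s : Set L) :
    Set.image2 (⁅·, ·⁆) (Set.range f) (f '' s) =
      f '' Set.image2 (⁅·, ·⁆) (Set.univ : Set L) s := by
  rw [← Set.image_univ, Set.image2_image_left, Set.image2_image_right, Set.image_image2]
  simp only [LieHom.map_lie]

theorem lowerCentralSeries_eq_span_image (hspan : span E (Set.range f) = ⊤) (k : ℕ) :
    (lowerCentralSeries E K K k).toSubmodule = span E (f '' lowerCentralSeries R L L k) := by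
  induction k with
  | zero => simpa using hspan.symm
  | succ k ih =>
    calc (lowerCentralSeries E K K (k + 1)).toSubmodule
        = span E (Set.image2 (⁅·, ·⁆) (span E (Set.range f) : Set K)
            (span E (f '' lowerCentralSeries R L L k))) := by
          rw [lowerCentralSeries_succ, LieSubmodule.lieIdeal_oper_eq_linear_span', hspan, ← ih]
          rfl
      _ = span E (f '' Set.image2 (⁅·, ·⁆) Set.univ (lowerCentralSeries R L L k)) := by
          rw [span_image2_lie_span_span, f.image2_lie_range]
      _ = span E (f '' lowerCentralSeries R L L (k + 1)) := by
          rw [lowerCentralSeries_succ,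
            ← LieSubmodule.coe_toSubmodule ⁅(⊤ : LieIdeal R L), lowerCentralSeries R L L k⁆,
            LieSubmodule.lieIdeal_oper_eq_linear_span']
          exact (span_image_span_of_tower (f : L →ₗ[R] K) _).symm

theorem lowerCentralSeries_eq_bot_iff (hinj : Function.Injective f)
    (hspan : span E (Set.range f) = ⊤) (k : ℕ) :
    lowerCentralSeries E K K k = ⊥ ↔ lowerCentralSeries R L L k = ⊥ := by
  rw [← LieSubmodule.toSubmodule_eq_bot, f.lowerCentralSeries_eq_span_image hspan, span_eq_bot,
    Set.forall_mem_image, LieSubmodule.eq_bot_iff]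
  simp only [SetLike.mem_coe, map_eq_zero_iff f hinj]

end LieHom

/-- If `(K, E)` is a completion of the rational Lie algebra `L` (i.e. `L` embeds in `K`
as a ℚ-Lie subalgebra and `K = Span_E(L)`) and `L` is nilpotent of class `c`, then `K` is
nilpotent of class exactly `c`. -/
theorem completion_nilpotent_same_class
    (E L K : Type) [Field E] [CharZero E]
    [LieRing L] [LieAlgebra ℚ L]
    [LieRing K] [LieAlgebra E K] [LieAlgebra ℚ K] [IsScalarTower ℚ E K]
    (ι : L →ₗ⁅ℚ⁆ K) (hinj : Function.Injective ι)
    (hspan : Submodule.span E (Set.range ι) = ⊤)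
    (c : ℕ)
    (hc : LieModule.lowerCentralSeries ℚ L L c = ⊥)
    (hc' : ∀ b < c, LieModule.lowerCentralSeries ℚ L L b ≠ ⊥) :
    LieModule.lowerCentralSeries E K K c = ⊥ ∧
      ∀ b < c, LieModule.lowerCentralSeries E K K b ≠ ⊥ :=
  ⟨(ι.lowerCentralSeries_eq_bot_iff hinj hspan c).2 hc,
    fun b hb => (ι.lowerCentralSeries_eq_bot_iff hinj hspan b).not.2 (hc' b hb)⟩
end
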